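/- Equivalence of two characterizations of the partial order on configurations: for admissible configurations X, Y, one has N(X,j) ≤ N(Y,j) for all j ∈ ℤ if and only if B(X,ξ) ≤ B(Y,ξ) for all ξ ∈ ℕ. -/

import Mathlib

/-!
For an admissible configuration, `B(X, ·)` and `N(X, ·)` are linked by the Galois-type
equivalence `B(X, ξ) ≤ j ↔ N(X, j) < ξ` (for `ξ ≥ 1`): the set `{j | N(X, j) < ξ}` is upward
closed since `N(X, ·)` is antitone, nonempty since `N(X, ·)` vanishes to the right of the last
nonempty bin, and bounded below since every bin left of it holds at least one ball. Both
orders are then read off this equivalence.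
-/

open scoped Classical

/-- A configuration of the infinite-bin model: number of balls in each bin. -/
abbrev Config := ℤ → ℕ∞

/-- Admissible configuration: nonempty bins form a semi-infinite interval, and
every bin to the left of an infinite bin is infinite. -/
def IsAdmissible (X : Config) : Prop :=
  (∃ m : ℤ, ∀ j : ℤ, X j ≠ 0 ↔ j ≤ m) ∧ ∀ j : ℤ, X j = ⊤ → X (j - 1) = ⊤

/-- N(X,k): number of balls in bins of index ≥ k. -/
noncomputable def Nballs (X : Config) (k : ℤ) : ℕ∞ := ∑' j : {j : ℤ // k ≤ j}, X j

/-- B(X,ξ): leftmost position such that there are fewer than ξ balls to its right. -/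
noncomputable def Bpos (X : Config) (ξ : ℕ) : ℤ := sInf {j : ℤ | Nballs X j < (ξ : ℕ∞)}

namespace ENat

theorem summable {ι : Type*} (f : ι → ℕ∞) : Summable f :=
  (hasSum_of_isLUB _ isLUB_iSup).summable

theorem le_of_forall_lt_natCast {a b : ℕ∞} (h : ∀ n : ℕ, b < n → a < n) : a ≤ b := by
  induction b using ENat.recTopCoe with
  | top => exact le_top
  | coe k => exact ENat.lt_natCast_add_one_iff.1 (by exact_mod_cast h (k + 1) (by exact_mod_cast k.lt_succ_self))

end ENat

theorem nballs_antitone (X : Config) : Antitone (Nballs X) := by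
  intro k l hkl
  refine (ENat.summable _).tsum_le_tsum_of_inj (fun i => ⟨i.1, hkl.trans i.2⟩) ?_
    (fun _ _ => zero_le) (fun _ => le_rfl) (ENat.summable _)
  intro a b hab
  simpa [Subtype.ext_iff] using hab

theorem nballs_eq_zero_iff {X : Config} {k : ℤ} : Nballs X k = 0 ↔ ∀ i, k ≤ i → X i = 0 := by
  rw [Nballs, (ENat.summable _).tsum_eq_zero_iff, Subtype.forall]

theorem toNat_sub_le_nballs {X : Config} {j m : ℤ} (h : ∀ i, j ≤ i → i ≤ m → X i ≠ 0) :
    ((m + 1 - j).toNat : ℕ∞) ≤ Nballs X j := by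
  set s : Finset {i : ℤ // j ≤ i} := (Finset.Icc j m).subtype (j ≤ ·)
  have hcard : s.card = (m + 1 - j).toNat := by
    rw [Finset.card_subtype, Finset.filter_true_of_mem fun i hi => (Finset.mem_Icc.1 hi).1,
      Int.card_Icc]
  calc ((m + 1 - j).toNat : ℕ∞) = ∑ _i ∈ s, (1 : ℕ∞) := by simp [hcard]
    _ ≤ ∑ i ∈ s, X i := by
        refine Finset.sum_le_sum fun i hi => Order.one_le_iff_ne_zero.2 ?_
        have hi' := Finset.mem_Icc.1 (Finset.mem_subtype.1 hi)
        exact h i hi'.1 hi'.2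
    _ ≤ Nballs X j := (ENat.summable _).sum_le_tsum s fun _ _ => zero_le

theorem bpos_le_iff {X : Config} {m : ℤ} (hm : ∀ j, X j ≠ 0 ↔ j ≤ m) {ξ : ℕ} (hξ : 1 ≤ ξ)
    (j : ℤ) : Bpos X ξ ≤ j ↔ Nballs X j < ξ := by
  set S : Set ℤ := {j : ℤ | Nballs X j < ξ}
  have hvanish : Nballs X (m + 1) = 0 :=
    nballs_eq_zero_iff.2 fun i hi => not_not.1 <| (not_congr (hm i)).2 (by omega)
  have hne : S.Nonempty := ⟨m + 1, show Nballs X (m + 1) < ξ by rw [hvanish]; exact_mod_cast hξ⟩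
  have hbdd : BddBelow S := by
    refine ⟨m + 2 - ξ, fun k hk => ?_⟩
    by_contra hlt
    have hlower : (ξ : ℕ∞) ≤ Nballs X k :=
      le_trans (by exact_mod_cast (by omega : ξ ≤ (m + 1 - k).toNat))
        (toNat_sub_le_nballs fun i _ hi => (hm i).2 hi)
    exact hlower.not_gt hk
  exact ⟨fun h => (nballs_antitone X h).trans_lt (Int.csInf_mem hne hbdd), fun h => csInf_le hbdd h⟩

/-- The two characterizations of the partial order on configurations agree. -/
theorem confLE_iff_bpos (X Y : Config) (hX : IsAdmissible X) (hY : IsAdmissible Y) :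
    (∀ j : ℤ, Nballs X j ≤ Nballs Y j) ↔ ∀ ξ : ℕ, 1 ≤ ξ → Bpos X ξ ≤ Bpos Y ξ := by
  obtain ⟨⟨mX, hmX⟩, -⟩ := hX
  obtain ⟨⟨mY, hmY⟩, -⟩ := hY
  constructor
  · intro h ξ hξ
    rw [bpos_le_iff hmX hξ]
    exact (h _).trans_lt ((bpos_le_iff hmY hξ _).1 le_rfl)
  · intro h j
    refine ENat.le_of_forall_lt_natCast fun ξ hYξ => ?_
    have hξ : 1 ≤ ξ := Nat.one_le_iff_ne_zero.2 fun h0 => by simp [h0] at hYξ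
    exact (bpos_le_iff hmX hξ j).1 ((h ξ hξ).trans ((bpos_le_iff hmY hξ j).2 hYξ))
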